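/- arXiv:dg-ga/9712003 — 2 statements merged into one kernel-verified Lean document; each statement's English description precedes it below -/
import Mathlib

section
/- Let λ ∈ ℝ with |λ| > 1, let A = diag(λ, 1/λ), and let M = [[a, b],[c, −a]] be a real traceless 2×2 matrix with b > 0 and c > 0. Then γ(t) = e^{Mt} A e^{−Mt}, t ∈ ℝ, is a positive path in Sp(2); moreover each γ(t) is conjugate to A by the symplectic matrix e^{Mt}, so γ stays in the symplectic conjugacy class of A. -/
/-!
The path `γ(t) = e^{tM} A e^{-tM}` is the conjugation of `A` by a one-parameter group, so
`γ' = e^{tM} (MA - AM) e^{-tM}`. Since `M` is Hamiltonian (`J M = -Mᵀ J`), `E = e^{tM}` is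
symplectic, and then `γ' = J P γ` with `P = (J E) D (J E)ᵀ` as soon as `D J A = MA - AM`.
For the given `A` and `M` this `D` is `diag(b(λ² - 1), c(1 - λ⁻²))`, positive definite
because `|λ| > 1` and `b, c > 0`, so `P` is positive definite as a congruence of `D`.
-/

open Matrix Set Real

attribute [local instance] Matrix.normedAddCommGroup Matrix.normedSpace

/-- The standard complex structure on `ℝ²`. -/
def J2 : Matrix (Fin 2) (Fin 2) ℝ := !![0, -1; 1, 0]

/-- A positive path in `Sp(2)` on the parameter set `s`. -/
def IsPosPath2 (s : Set ℝ) (A : ℝ → Matrix (Fin 2) (Fin 2) ℝ) : Prop :=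
  ∀ t ∈ s, (A t)ᵀ * J2 * A t = J2 ∧
    ∃ P : Matrix (Fin 2) (Fin 2) ℝ, P.IsSymm ∧ P.PosDef ∧
      HasDerivWithinAt A (J2 * P * A t) s t

open NormedSpace

theorem hasDerivAt_exp_smul_mul_mul_exp_neg_smul {𝕂 𝔸 : Type*} [RCLike 𝕂] [NormedRing 𝔸]
    [NormedAlgebra 𝕂 𝔸] [CompleteSpace 𝔸] (x a : 𝔸) (t : 𝕂) :
    HasDerivAt (fun u : 𝕂 => exp (u • x) * a * exp ((-u) • x))
      (exp (t • x) * (x * a - a * x) * exp ((-t) • x)) t := by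
  have hneg : HasDerivAt (fun u : 𝕂 => exp ((-u) • x)) (-(x * exp ((-t) • x))) t := by
    simpa [neg_smul, smul_neg] using hasDerivAt_exp_smul_const' (-x) t
  refine (((hasDerivAt_exp_smul_const x t).mul_const a).mul hneg).congr_deriv ?_
  noncomm_ring

namespace Matrix

variable {n 𝕂 : Type*} [Fintype n] [DecidableEq n] [RCLike 𝕂]

/- `Norms.Operator` equips matrices with the operator norm, making them a Banach algebra; the
statements only involve the topology, which is the same for every norm. -/
theorem hasDerivAt_exp_smul_mul_mul_exp_neg_smul (M A : Matrix n n 𝕂) (t : 𝕂) :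
    HasDerivAt (fun u : 𝕂 => exp (u • M) * A * exp ((-u) • M))
      (exp (t • M) * (M * A - A * M) * exp ((-t) • M)) t :=
  open scoped Norms.Operator in _root_.hasDerivAt_exp_smul_mul_mul_exp_neg_smul M A t

theorem transpose_exp_mul_mul_exp {J X : Matrix n n 𝕂} (h : J * X = -Xᵀ * J) :
    (exp X)ᵀ * J * exp X = J := by
  have h' : exp (-(-Xᵀ)) * J * exp X = J :=
    open scoped Norms.Operator in SemiconjBy.exp_neg_mul_mul_exp_eq_self h
  rwa [neg_neg, exp_transpose] at h'

end Matrix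

theorem J2_mul_J2 : J2 * J2 = -1 := by
  ext i j; fin_cases i <;> fin_cases j <;> simp [J2]

theorem transpose_J2 : J2ᵀ = -J2 := by
  ext i j; fin_cases i <;> fin_cases j <;> simp [J2]

theorem isUnit_J2 : IsUnit J2 := by
  simp [isUnit_iff_isUnit_det, J2, det_fin_two_of]

theorem transpose_mul_J2_mul_mul {S T : Matrix (Fin 2) (Fin 2) ℝ} (hS : Sᵀ * J2 * S = J2)
    (hT : Tᵀ * J2 * T = J2) : (S * T)ᵀ * J2 * (S * T) = J2 := by
  calc (S * T)ᵀ * J2 * (S * T) = Tᵀ * (Sᵀ * J2 * S) * T := by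
        simp only [transpose_mul, mul_assoc]
    _ = J2 := by rw [hS, hT]

theorem transpose_exp_smul_mul_J2_mul_exp_smul {M : Matrix (Fin 2) (Fin 2) ℝ}
    (hM : J2 * M = -Mᵀ * J2) (s : ℝ) : (exp (s • M))ᵀ * J2 * exp (s • M) = J2 :=
  transpose_exp_mul_mul_exp <| by
    simp only [transpose_smul, mul_smul_comm, hM, neg_mul, smul_mul_assoc, smul_neg]

theorem isPosPath2_exp_smul_mul_mul_exp_neg_smul {M A D : Matrix (Fin 2) (Fin 2) ℝ}
    (hM : J2 * M = -Mᵀ * J2) (hA : Aᵀ * J2 * A = J2) (hD : D.PosDef)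
    (hDA : D * J2 * A = M * A - A * M) :
    IsPosPath2 univ (fun t => exp (t • M) * A * exp ((-t) • M)) := by
  intro t _
  set E := exp (t • M)
  set F := exp ((-t) • M)
  have hsymp := transpose_exp_smul_mul_J2_mul_exp_smul hM
  have hP : (J2 * E * D * (J2 * E)ᵀ).PosDef := by
    simpa [conjTranspose_eq_transpose_of_trivial] using hD.mul_mul_conjTranspose_same
      (vecMul_injective_iff_isUnit.mpr (isUnit_J2.mul (isUnit_exp (t • M))))
  refine ⟨transpose_mul_J2_mul_mul (transpose_mul_J2_mul_mul (hsymp t) hA) (hsymp (-t)),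
    _, isHermitian_iff_isSymm.mp hP.isHermitian, hP, ?_⟩
  refine (hasDerivAt_exp_smul_mul_mul_exp_neg_smul M A t).hasDerivWithinAt.congr_deriv ?_
  calc E * (M * A - A * M) * F
      = E * (D * J2 * A) * F := by rw [hDA]
    _ = J2 * J2 * E * D * (-(Eᵀ * J2 * E)) * A * F := by
        rw [hsymp t, J2_mul_J2]; simp only [one_mul, neg_mul, mul_neg, neg_neg, mul_assoc]
    _ = J2 * (J2 * E * D * (J2 * E)ᵀ) * (E * A * F) := by
        simp only [transpose_mul, transpose_J2, mul_neg, neg_mul, mul_assoc]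

/-- For `A = diag(λ, 1/λ)` with `|λ| > 1` and `M = [[a,b],[c,-a]]` with `b, c > 0`, the
path `γ(t) = e^{Mt} A e^{-Mt}` is a positive path in `Sp(2)` staying in the symplectic
conjugacy class of `A`: each `e^{Mt}` is symplectic and `γ(t) = e^{Mt} A (e^{Mt})⁻¹`. -/
theorem stmt7 (lam a b c : ℝ) (hlam : 1 < |lam|) (hb : 0 < b) (hc : 0 < c)
    (A M : Matrix (Fin 2) (Fin 2) ℝ)
    (hA : A = !![lam, 0; 0, lam⁻¹]) (hM : M = !![a, b; c, -a]) :
    IsPosPath2 Set.univ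
      (fun t => NormedSpace.exp (t • M) * A * NormedSpace.exp ((-t) • M)) ∧
    ∀ t : ℝ,
      (NormedSpace.exp (t • M))ᵀ * J2 * NormedSpace.exp (t • M) = J2 ∧
      NormedSpace.exp (t • M) * A * NormedSpace.exp ((-t) • M) =
        NormedSpace.exp (t • M) * A * (NormedSpace.exp (t • M))⁻¹ := by
  have hlam0 : lam ≠ 0 := by rintro rfl; norm_num at hlam
  have hlam2 : 1 < lam ^ 2 := one_lt_sq_iff_one_lt_abs lam |>.mpr hlam
  have hMJ : J2 * M = -Mᵀ * J2 := by
    subst hM; ext i j; fin_cases i <;> fin_cases j <;> simp [J2, mul_apply, Fin.sum_univ_two]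
  have hAJ : Aᵀ * J2 * A = J2 := by
    subst hA
    ext i j
    fin_cases i <;> fin_cases j <;> simp [J2, mul_apply, Fin.sum_univ_two, hlam0]
  set D := diagonal ![b * (lam ^ 2 - 1), c * (1 - (lam ^ 2)⁻¹)]
  have hD : D.PosDef := by
    rw [posDef_diagonal_iff, Fin.forall_fin_two]
    exact ⟨mul_pos hb (by linarith), mul_pos hc (by linarith [inv_lt_one_of_one_lt₀ hlam2])⟩
  have hDA : D * J2 * A = M * A - A * M := by
    subst hA hM
    ext i j
    fin_cases i <;> fin_cases j <;> simp [D, J2, mul_apply, Fin.sum_univ_two] <;>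
      field_simp <;> ring
  refine ⟨isPosPath2_exp_smul_mul_mul_exp_neg_smul hMJ hAJ hD hDA, fun t => ⟨?_, ?_⟩⟩
  · exact transpose_exp_smul_mul_J2_mul_exp_smul hMJ t
  · rw [neg_smul, Matrix.exp_neg]
end

section
/- There exist positive paths γ⁺, γ⁻ : [0,∞) → Sp(2) such that trace(γ⁺(t)) → +∞ and trace(γ⁻(t)) → −∞ as t → ∞. -/
/-!
A lower shear `S(a) = !![1, 0; a, 1]` satisfies `S' = J · diag(a', 0) · S`, with a positive
semidefinite generator when `a' ≥ 0`, and a rotation satisfies `R(θ)' = θ' · J · R(θ)`. Since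
`S J = J S⁻ᵀ`, the product `S(σ t) R(θ t)` is a positive path with generator
`diag(σ', 0) + θ' S⁻ᵀ S⁻¹`, positive definite as soon as `θ' > 0`. Its trace is
`2 cos θ - σ sin θ`; for `σ t = t`, `θ t = arctan t` this is at most `3 - t`, so it tends to `-∞`,
and the negated path, still positive, has trace tending to `+∞`.
-/

open Matrix Set Real

attribute [local instance] Matrix.normedAddCommGroup Matrix.normedSpace

open Filter

theorem hasDerivAt_matrix_iff {m n : Type*} [Fintype m] [Fintype n] {A : ℝ → Matrix m n ℝ}
    {A' : Matrix m n ℝ} {t : ℝ} :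
    HasDerivAt A A' t ↔ ∀ i j, HasDerivAt (fun τ => A τ i j) (A' i j) t :=
  hasDerivAt_pi.trans (forall_congr' fun _ => hasDerivAt_pi)

theorem HasDerivAt.matrix_mul {m n p : Type*} [Fintype m] [Fintype n] [Fintype p]
    {A : ℝ → Matrix m n ℝ} {B : ℝ → Matrix n p ℝ} {A' : Matrix m n ℝ} {B' : Matrix n p ℝ} {t : ℝ}
    (hA : HasDerivAt A A' t) (hB : HasDerivAt B B' t) :
    HasDerivAt (fun τ => A τ * B τ) (A' * B t + A t * B') t := by
  rw [hasDerivAt_matrix_iff] at hA hB ⊢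
  intro i j
  simp only [Matrix.add_apply, Matrix.mul_apply, ← Finset.sum_add_distrib]
  exact HasDerivAt.fun_sum fun k _ => (hA i k).mul (hB k j)

theorem transpose_mul_J2_mul_self (A : Matrix (Fin 2) (Fin 2) ℝ) :
    Aᵀ * J2 * A = A.det • J2 := by
  ext i j
  fin_cases i <;> fin_cases j <;>
    simp [J2, Matrix.det_fin_two, Matrix.mul_apply, Fin.sum_univ_two] <;> ring

noncomputable def rotationMatrix (θ : ℝ) : Matrix (Fin 2) (Fin 2) ℝ :=
  !![cos θ, -sin θ; sin θ, cos θ]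

def shearMatrix (a : ℝ) : Matrix (Fin 2) (Fin 2) ℝ := !![1, 0; a, 1]

theorem det_rotationMatrix (θ : ℝ) : (rotationMatrix θ).det = 1 := by
  simp [rotationMatrix, Matrix.det_fin_two, ← sq, cos_sq_add_sin_sq]

theorem det_shearMatrix (a : ℝ) : (shearMatrix a).det = 1 := by
  simp [shearMatrix, Matrix.det_fin_two]

theorem hasDerivAt_rotationMatrix (θ : ℝ) :
    HasDerivAt rotationMatrix (J2 * rotationMatrix θ) θ := by
  rw [hasDerivAt_matrix_iff]
  intro i j
  fin_cases i <;> fin_cases j <;> simp [rotationMatrix, J2, Matrix.mul_apply]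
  exacts [hasDerivAt_cos θ, (hasDerivAt_sin θ).neg, hasDerivAt_sin θ, hasDerivAt_cos θ]

theorem hasDerivAt_shearMatrix (a : ℝ) :
    HasDerivAt shearMatrix !![0, 0; 1, 0] a := by
  rw [hasDerivAt_matrix_iff]
  intro i j
  fin_cases i <;> fin_cases j <;> simp [shearMatrix]
  exacts [hasDerivAt_const _ _, hasDerivAt_const _ _, hasDerivAt_id' _, hasDerivAt_const _ _]

theorem isPosPath2_shearMatrix_mul_rotationMatrix {s : Set ℝ} {σ θ σ' θ' : ℝ → ℝ}
    (hσ : ∀ t ∈ s, HasDerivAt σ (σ' t) t) (hθ : ∀ t ∈ s, HasDerivAt θ (θ' t) t)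
    (hσ' : ∀ t ∈ s, 0 ≤ σ' t) (hθ' : ∀ t ∈ s, 0 < θ' t) :
    IsPosPath2 s (fun t => shearMatrix (σ t) * rotationMatrix (θ t)) := by
  intro t ht
  -- `shearMatrix (-σ t)` is the inverse of `shearMatrix (σ t)`
  set P := Matrix.diagonal ![σ' t, 0] + θ' t • ((shearMatrix (-σ t))ᵀ * shearMatrix (-σ t))
  have hP : P.PosDef := by
    refine Matrix.PosDef.posSemidef_add (Matrix.PosSemidef.diagonal ?_)
      (Matrix.PosDef.smul ?_ (hθ' t ht))
    · intro i; fin_cases i <;> simp [hσ' t ht]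
    · rw [← Matrix.conjTranspose_eq_transpose_of_trivial]
      refine Matrix.PosDef.conjTranspose_mul_self _ ?_
      rw [Matrix.mulVec_injective_iff_isUnit, Matrix.isUnit_iff_isUnit_det, det_shearMatrix]
      exact isUnit_one
  refine ⟨?_, P, Matrix.isHermitian_iff_isSymm.mp hP.isHermitian, hP, ?_⟩
  · rw [transpose_mul_J2_mul_self, Matrix.det_mul, det_shearMatrix, det_rotationMatrix]
    simp
  · have h := ((hasDerivAt_shearMatrix (σ t)).scomp t (hσ t ht)).matrix_mul
      ((hasDerivAt_rotationMatrix (θ t)).scomp t (hθ t ht))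
    have hPS : J2 * P * shearMatrix (σ t) =
        σ' t • !![0, 0; 1, 0] + θ' t • (shearMatrix (σ t) * J2) := by
      ext i j
      fin_cases i <;> fin_cases j <;>
        simp [P, J2, shearMatrix, Matrix.mul_apply, Fin.sum_univ_two, Matrix.vecMul, dotProduct]
      ring
    refine (h.congr_deriv ?_).hasDerivWithinAt
    rw [← mul_assoc, hPS, Matrix.add_mul]
    simp only [Function.comp_apply, Matrix.smul_mul, Matrix.mul_smul, Matrix.mul_assoc]

theorem IsPosPath2.neg {s : Set ℝ} {A : ℝ → Matrix (Fin 2) (Fin 2) ℝ} (hA : IsPosPath2 s A) :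
    IsPosPath2 s (-A) := by
  intro t ht
  obtain ⟨hsympl, P, hPsymm, hP, hderiv⟩ := hA t ht
  refine ⟨by simpa using hsympl, P, hPsymm, hP, ?_⟩
  rw [Pi.neg_apply, Matrix.mul_neg]
  exact hderiv.neg

theorem trace_shearMatrix_mul_rotationMatrix (a θ : ℝ) :
    (shearMatrix a * rotationMatrix θ).trace = 2 * cos θ - a * sin θ := by
  simp [shearMatrix, rotationMatrix, Matrix.trace_fin_two]
  ring

theorem sub_one_le_mul_sin_arctan (t : ℝ) : t - 1 ≤ t * sin (arctan t) := by
  have hs : √(1 + t ^ 2) ^ 2 = 1 + t ^ 2 := Real.sq_sqrt (by positivity)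
  have hs_pos : 0 < √(1 + t ^ 2) := by positivity
  rw [sin_arctan, mul_div_assoc', le_div_iff₀ hs_pos]
  nlinarith [sq_nonneg (√(1 + t ^ 2) - t - 1), sq_nonneg t]

theorem trace_shearMatrix_mul_rotationMatrix_arctan_le (t : ℝ) :
    (shearMatrix t * rotationMatrix (arctan t)).trace ≤ 3 - t := by
  rw [trace_shearMatrix_mul_rotationMatrix]
  linarith [cos_le_one (arctan t), sub_one_le_mul_sin_arctan t]

/-- There exist positive paths `γ⁺, γ⁻ : [0,∞) → Sp(2)` whose traces tend to `+∞`
and `-∞` respectively. -/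
theorem stmt10 :
    ∃ γp γm : ℝ → Matrix (Fin 2) (Fin 2) ℝ,
      IsPosPath2 (Set.Ici (0 : ℝ)) γp ∧ IsPosPath2 (Set.Ici (0 : ℝ)) γm ∧
      Filter.Tendsto (fun t => (γp t).trace) Filter.atTop Filter.atTop ∧
      Filter.Tendsto (fun t => (γm t).trace) Filter.atTop Filter.atBot := by
  set γ : ℝ → Matrix (Fin 2) (Fin 2) ℝ := fun t => shearMatrix t * rotationMatrix (arctan t)
  have hγ : IsPosPath2 (Set.Ici 0) γ :=
    isPosPath2_shearMatrix_mul_rotationMatrix (fun t _ => hasDerivAt_id' t)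
      (fun t _ => hasDerivAt_arctan t) (fun _ _ => zero_le_one) (fun _ _ => by positivity)
  have hγ_trace : Tendsto (fun t => (γ t).trace) atTop atBot :=
    tendsto_atBot_mono trace_shearMatrix_mul_rotationMatrix_arctan_le
      (tendsto_atBot_add_const_left _ 3 tendsto_neg_atTop_atBot)
  refine ⟨-γ, γ, hγ.neg, hγ, ?_, hγ_trace⟩
  simpa [Matrix.trace_neg] using hγ_trace
end
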